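/- arXiv:2405.11648 — 7 statements merged into one kernel-verified Lean document; each statement's English description precedes it below -/
import Mathlib

section
/- Let (X,G) be a complete G-metric space with at least 3 elements, and let T : X → X be a mapping such that (I) for all x ∈ X, if Tx ≠ x then T(Tx) ≠ x, and (II) there exists a constant λ ∈ (0,1) such that G(Tx,Ty,Tz) ≤ λ·G(x,y,z) for all pairwise distinct points x, y, z ∈ X. Then T has at least one fixed point, and T has at most two fixed points. -/
/-! Without a fixed point, condition (I) makes every triple `x, T x, T (T x)` pairwise distinct,
so the values `G (Tⁿ x) (Tⁿ⁺¹ x) (Tⁿ⁺² x)` decay geometrically. The orbit is then Cauchy for the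
metric `d_G x y = G x y y + G y x x`, and it is not periodic, so it eventually avoids both its
limit `p` and `T p`; contracting the distinct triples `(p, Tⁿ x, Tⁿ⁺¹ x)` shows `Tⁿ⁺¹ x → T p`,
hence `T p = p`. Three distinct fixed points would contradict the contraction with `λ < 1`. -/

open Filter

/-- A G-metric on `X` in the sense of Mustafa and Sims: (P1) `G x y z = 0` iff `x = y = z`;
(P2) `G x x y > 0` if `x ≠ y`; (P3) invariance under all permutations of the arguments
(generated by the two swaps below); (P4) `G x x y ≤ G x y z` if `y ≠ z`;
(P5) `G x y z ≤ G x w w + G w y z`. The codomain is `[0, ∞)`, encoded by `nonneg`. -/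
structure IsGMetric {X : Type*} (G : X → X → X → ℝ) : Prop where
  nonneg : ∀ x y z, 0 ≤ G x y z
  eq_zero_iff : ∀ x y z, G x y z = 0 ↔ x = y ∧ y = z
  pos_of_ne : ∀ x y, x ≠ y → 0 < G x x y
  swap_left : ∀ x y z, G x y z = G y x z
  swap_right : ∀ x y z, G x y z = G x z y
  le_of_ne : ∀ x y z, y ≠ z → G x x y ≤ G x y z
  triangle : ∀ x y z w, G x y z ≤ G x w w + G w y z

/-- A sequence `u` is `G`-Cauchy if `G (u n) (u m) (u m) → 0` as `n, m → ∞`. -/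
def GCauchy {X : Type*} (G : X → X → X → ℝ) (u : ℕ → X) : Prop :=
  Tendsto (fun p : ℕ × ℕ => G (u p.1) (u p.2) (u p.2)) atTop (nhds 0)

/-- A sequence `u` is `G`-convergent to `x` if `G (u n) x x → 0` as `n → ∞`. -/
def GConvergent {X : Type*} (G : X → X → X → ℝ) (u : ℕ → X) (x : X) : Prop :=
  Tendsto (fun n => G (u n) x x) atTop (nhds 0)

/-- `(X, G)` is complete if every `G`-Cauchy sequence is `G`-convergent to some point. -/
def GComplete {X : Type*} (G : X → X → X → ℝ) : Prop :=
  ∀ u : ℕ → X, GCauchy G u → ∃ x, GConvergent G u x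


open Topology Function

def ContractsDistinctTriples {X : Type*} (G : X → X → X → ℝ) (T : X → X) (lam : ℝ) : Prop :=
  ∀ x y z, x ≠ y → x ≠ z → y ≠ z → G (T x) (T y) (T z) ≤ lam * G x y z

namespace ContractsDistinctTriples

variable {X : Type*} {G : X → X → X → ℝ} {T : X → X} {lam : ℝ}

theorem iterate_le (hT : ContractsDistinctTriples G T lam) (hlam : 0 ≤ lam)
    (hT₁ : ∀ x, T x ≠ x) (hT₂ : ∀ x, T (T x) ≠ x) (x : X) (n : ℕ) :
    G (T^[n] x) (T (T^[n] x)) (T (T (T^[n] x))) ≤ lam ^ n * G x (T x) (T (T x)) := by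
  induction n with
  | zero => simp
  | succ n ih =>
    set y := T^[n] x
    rw [iterate_succ_apply']
    calc G (T y) (T (T y)) (T (T (T y)))
        ≤ lam * G y (T y) (T (T y)) := hT _ _ _ (hT₁ y).symm (hT₂ y).symm (hT₁ (T y)).symm
      _ ≤ lam * (lam ^ n * G x (T x) (T (T x))) := by gcongr
      _ = lam ^ (n + 1) * G x (T x) (T (T x)) := by ring

end ContractsDistinctTriples

namespace IsGMetric

variable {X : Type*} {G : X → X → X → ℝ}

theorem self_self_self (hG : IsGMetric G) (x : X) : G x x x = 0 :=
  (hG.eq_zero_iff x x x).2 ⟨rfl, rfl⟩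

theorem le_two_mul_swap (hG : IsGMetric G) (x y : X) : G x y y ≤ 2 * G y x x := by
  have h := hG.triangle y y x x
  rw [hG.swap_left x y x] at h
  rw [hG.swap_left x y y, hG.swap_right y x y]
  linarith

theorem le_of_ne' (hG : IsGMetric G) {x z : X} (y : X) (hzx : z ≠ x) : G x y y ≤ G x y z := by
  rw [hG.swap_left x y y, hG.swap_right y x y, hG.swap_left x y z]
  exact hG.le_of_ne y x z hzx.symm

theorem pos_of_ne_of_ne (hG : IsGMetric G) {x y z : X} (hxy : x ≠ y) (hyz : y ≠ z) :
    0 < G x y z :=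
  (hG.pos_of_ne x y hxy).trans_le (hG.le_of_ne x y z hyz)

abbrev toMetricSpace (hG : IsGMetric G) : MetricSpace X where
  dist x y := G x y y + G y x x
  dist_self x := by simp [hG.self_self_self]
  dist_comm x y := add_comm _ _
  dist_triangle x y z := by
    have := hG.triangle x z z y
    have := hG.triangle z x x y
    linarith
  eq_of_dist_eq_zero {x y} h := by
    have hxy : G x y y = 0 := by linarith [hG.nonneg x y y, hG.nonneg y x x]
    exact ((hG.eq_zero_iff x y y).1 hxy).1

theorem dist_eq (hG : IsGMetric G) (x y : X) :
    letI := hG.toMetricSpace; dist x y = G x y y + G y x x := rfl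

theorem dist_le_three_mul (hG : IsGMetric G) (x y : X) :
    letI := hG.toMetricSpace; dist x y ≤ 3 * G x y y := by
  linarith [hG.dist_eq x y, hG.le_two_mul_swap y x]

theorem dist_le_two_mul (hG : IsGMetric G) {x y z : X} (hxz : x ≠ z) (hyz : y ≠ z) :
    letI := hG.toMetricSpace; dist x y ≤ 2 * G x y z := by
  have hy : G y x x ≤ G x y z := by
    rw [hG.swap_left y x x, hG.swap_right x y x]
    exact hG.le_of_ne x y z hyz
  linarith [hG.dist_eq x y, hG.le_of_ne' y hxz.symm]

theorem le_dist_add_dist (hG : IsGMetric G) (x y z : X) :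
    letI := hG.toMetricSpace; G x y z ≤ dist x y + dist y z := by
  have h := hG.triangle x y z y
  rw [hG.swap_right y y z, hG.swap_left y z y] at h
  linarith [hG.dist_eq x y, hG.dist_eq y z, hG.nonneg y x x, hG.nonneg y z z]

theorem gCauchy_of_cauchySeq (hG : IsGMetric G) {u : ℕ → X}
    (hu : letI := hG.toMetricSpace; CauchySeq u) : GCauchy G u := by
  let _ := hG.toMetricSpace
  refine squeeze_zero (fun _ => hG.nonneg _ _ _) (fun p => ?_)
    (cauchySeq_iff_tendsto_dist_atTop_0.1 hu)
  linarith [hG.dist_eq (u p.1) (u p.2), hG.nonneg (u p.2) (u p.1) (u p.1)]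

theorem tendsto_of_gConvergent (hG : IsGMetric G) {u : ℕ → X} {x : X}
    (hu : GConvergent G u x) : letI := hG.toMetricSpace; Tendsto u atTop (𝓝 x) := by
  let _ := hG.toMetricSpace
  refine tendsto_iff_dist_tendsto_zero.2 <|
    squeeze_zero (fun _ => dist_nonneg) (fun n => hG.dist_le_three_mul (u n) x) ?_
  simpa using hu.const_mul 3

theorem completeSpace (hG : IsGMetric G) (hcomp : GComplete G) :
    letI := hG.toMetricSpace; CompleteSpace X :=
  let _ := hG.toMetricSpace
  UniformSpace.complete_of_cauchySeq_tendsto fun u hu =>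
    (hcomp u (hG.gCauchy_of_cauchySeq hu)).imp fun _ => hG.tendsto_of_gConvergent

variable {T : X → X} {lam : ℝ}

theorem eq_or_eq_or_eq_of_isFixedPt (hG : IsGMetric G) (hT : ContractsDistinctTriples G T lam)
    (hlam : lam < 1) {x y z : X} (hx : IsFixedPt T x) (hy : IsFixedPt T y) (hz : IsFixedPt T z) :
    x = y ∨ x = z ∨ y = z := by
  by_contra! h
  obtain ⟨hxy, hxz, hyz⟩ := h
  have hpos := hG.pos_of_ne_of_ne hxy hyz
  have hcontr := hT x y z hxy hxz hyz
  rw [hx, hy, hz] at hcontr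
  nlinarith

theorem injective_iterate (hG : IsGMetric G) (hT : ContractsDistinctTriples G T lam)
    (hlam₀ : 0 ≤ lam) (hlam₁ : lam < 1) (hT₁ : ∀ x, T x ≠ x) (hT₂ : ∀ x, T (T x) ≠ x) (x : X) :
    Injective fun n => T^[n] x := by
  refine Injective.of_lt_imp_ne fun n m hnm heq => ?_
  obtain ⟨k, rfl⟩ := Nat.exists_eq_add_of_lt hnm
  set y := T^[n] x
  have hy : T^[k + 1] y = y := by
    rw [← iterate_add_apply, show k + 1 + n = n + k + 1 by omega]
    exact heq.symm
  have hdecay := hT.iterate_le hlam₀ hT₁ hT₂ y (k + 1)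
  rw [hy] at hdecay
  have hpos := hG.pos_of_ne_of_ne (hT₁ y).symm (hT₁ (T y)).symm
  have hpow : lam ^ (k + 1) < 1 := pow_lt_one₀ hlam₀ hlam₁ k.succ_ne_zero
  nlinarith

theorem cauchySeq_iterate (hG : IsGMetric G) (hT : ContractsDistinctTriples G T lam)
    (hlam₀ : 0 ≤ lam) (hlam₁ : lam < 1) (hT₁ : ∀ x, T x ≠ x) (hT₂ : ∀ x, T (T x) ≠ x) (x : X) :
    letI := hG.toMetricSpace; CauchySeq fun n => T^[n] x := by
  let _ := hG.toMetricSpace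
  refine cauchySeq_of_le_geometric lam (2 * G x (T x) (T (T x))) hlam₁ fun n => ?_
  rw [iterate_succ_apply']
  calc dist (T^[n] x) (T (T^[n] x))
      ≤ 2 * G (T^[n] x) (T (T^[n] x)) (T (T (T^[n] x))) :=
        hG.dist_le_two_mul (hT₂ _).symm (hT₁ _).symm
    _ ≤ 2 * (lam ^ n * G x (T x) (T (T x))) := by
        gcongr; exact hT.iterate_le hlam₀ hT₁ hT₂ x n
    _ = 2 * G x (T x) (T (T x)) * lam ^ n := by ring

theorem isFixedPt_of_tendsto_orbit (hG : IsGMetric G) (hT : ContractsDistinctTriples G T lam)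
    (hlam : 0 ≤ lam) {u : ℕ → X} (hu : ∀ n, u (n + 1) = T (u n)) (hinj : Injective u) {x : X}
    (hx : letI := hG.toMetricSpace; Tendsto u atTop (𝓝 x)) : IsFixedPt T x := by
  let _ := hG.toMetricSpace
  have hx' : Tendsto (fun n => u (n + 1)) atTop (𝓝 x) := hx.comp (tendsto_add_atTop_nat 1)
  have hfar (y : X) : ∀ᶠ n in atTop, u n ≠ y :=
    (Nat.cofinite_eq_atTop ▸ hinj.tendsto_cofinite).eventually (eventually_cofinite_ne y)
  have hbound : ∀ᶠ n in atTop,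
      dist (u (n + 1)) (T x) ≤ 3 * lam * (dist x (u n) + dist (u n) (u (n + 1))) := by
    filter_upwards [hfar x, (tendsto_add_atTop_nat 1).eventually (hfar x),
      (tendsto_add_atTop_nat 2).eventually (hfar (T x))] with n hn hn₁ hn₂
    calc dist (u (n + 1)) (T x) = dist (T x) (u (n + 1)) := dist_comm _ _
      _ ≤ 3 * G (T x) (u (n + 1)) (u (n + 1)) := hG.dist_le_three_mul _ _
      _ ≤ 3 * G (T x) (T (u n)) (T (u (n + 1))) := by
          rw [← hu, ← hu]; gcongr; exact hG.le_of_ne' _ hn₂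
      _ ≤ 3 * (lam * G x (u n) (u (n + 1))) := by
          gcongr; exact hT _ _ _ hn.symm hn₁.symm (hinj.ne n.succ_ne_self.symm)
      _ ≤ 3 * lam * (dist x (u n) + dist (u n) (u (n + 1))) := by
          rw [mul_assoc]; gcongr; exact hG.le_dist_add_dist _ _ _
  have hlim :
      Tendsto (fun n => 3 * lam * (dist x (u n) + dist (u n) (u (n + 1)))) atTop (𝓝 0) := by
    simpa using (((tendsto_const_nhds (x := x)).dist hx).add (hx.dist hx')).const_mul (3 * lam)
  have hTx : Tendsto (fun n => u (n + 1)) atTop (𝓝 (T x)) :=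
    tendsto_iff_dist_tendsto_zero.2 <|
      squeeze_zero' (Eventually.of_forall fun _ => dist_nonneg) hbound hlim
  exact tendsto_nhds_unique hTx hx'

end IsGMetric

theorem banach_fixedPoint_GMetric_general {X : Type*} [Nonempty X] (G : X → X → X → ℝ)
    (hG : IsGMetric G) (hcomp : GComplete G)
    (T : X → X)
    (hI : ∀ x : X, T x ≠ x → T (T x) ≠ x)
    (hII : ∃ lam : ℝ, 0 < lam ∧ lam < 1 ∧
      ∀ x y z : X, x ≠ y → x ≠ z → y ≠ z →
        G (T x) (T y) (T z) ≤ lam * G x y z) :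
    (∃ x : X, T x = x) ∧
      ∀ x y z : X, T x = x → T y = y → T z = z → x = y ∨ x = z ∨ y = z := by
  obtain ⟨lam, hlam₀, hlam₁, hT⟩ := hII
  refine ⟨?_, fun x y z => hG.eq_or_eq_or_eq_of_isFixedPt hT hlam₁⟩
  let _ := hG.toMetricSpace
  have := hG.completeSpace hcomp
  by_contra! hT₁
  have hT₂ (x : X) : T (T x) ≠ x := hI x (hT₁ x)
  obtain ⟨x₀⟩ := ‹Nonempty X›
  obtain ⟨x, hx⟩ := cauchySeq_tendsto_of_complete <|
    hG.cauchySeq_iterate hT hlam₀.le hlam₁ hT₁ hT₂ x₀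
  exact hT₁ x <| hG.isFixedPt_of_tendsto_orbit hT hlam₀.le
    (fun n => iterate_succ_apply' T n x₀) (hG.injective_iterate hT hlam₀.le hlam₁ hT₁ hT₂ x₀) hx

/-- Banach fixed point theorem in G-metric spaces (Theorem 3.1). -/
theorem banach_fixedPoint_GMetric {X : Type*} [Nonempty X] (G : X → X → X → ℝ)
    (hG : IsGMetric G) (hcomp : GComplete G)
    (hcard : ∃ a b c : X, a ≠ b ∧ a ≠ c ∧ b ≠ c)
    (T : X → X)
    (hI : ∀ x : X, T x ≠ x → T (T x) ≠ x)
    (hII : ∃ lam : ℝ, 0 < lam ∧ lam < 1 ∧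
      ∀ x y z : X, x ≠ y → x ≠ z → y ≠ z →
        G (T x) (T y) (T z) ≤ lam * G x y z) :
    (∃ x : X, T x = x) ∧
      ∀ x y z : X, T x = x → T y = y → T z = z → x = y ∨ x = z ∨ y = z :=
  banach_fixedPoint_GMetric_general G hG hcomp T hI hII
end

section
/- Let (X,d) be a complete metric space with at least 3 elements and let T : X → X be a mapping such that (I) for all x ∈ X, if Tx ≠ x then T(Tx) ≠ x, and (II) there exists a constant λ ∈ (0,1) such that d(Tx,Ty) + d(Ty,Tz) + d(Tz,Tx) ≤ λ·[d(x,y) + d(y,z) + d(z,x)] for all pairwise distinct points x, y, z ∈ X. Then T has at least one fixed point, and T has at most two fixed points. -/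
/-!
If `T` had no fixed point, then by (I) the points `x, T x, T² x` would always form a genuine
triangle, so the perimeters of consecutive triangles along an orbit decrease geometrically.
This makes every orbit Cauchy and, since a positive perimeter cannot return to its own value,
injective. The limit `b` of an orbit is then eventually distinct from the orbit points, and
comparing the triangle `xₙ, xₙ₊₁, b` with its image shows `d(T b, b) = 0`, a contradiction.
Three distinct fixed points would form a triangle whose perimeter is not contracted.
-/

open Filter Topology Function

section

variable {X : Type*} [MetricSpace X]

def perimeter (x y z : X) : ℝ := dist x y + dist y z + dist z x

theorem dist_le_perimeter (x y z : X) : dist x y ≤ perimeter x y z := by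
  unfold perimeter
  linarith [dist_nonneg (x := y) (y := z), dist_nonneg (x := z) (y := x)]

theorem perimeter_pos {x y : X} (h : x ≠ y) (z : X) : 0 < perimeter x y z :=
  (dist_pos.2 h).trans_le (dist_le_perimeter x y z)

@[simp]
theorem perimeter_self (x : X) : perimeter x x x = 0 := by
  simp [perimeter]

def ContractsPerimeters (T : X → X) (lam : ℝ) : Prop :=
  ∀ x y z, x ≠ y → x ≠ z → y ≠ z → perimeter (T x) (T y) (T z) ≤ lam * perimeter x y z

def orbitPerimeter (T : X → X) (x : X) : ℝ := perimeter x (T x) (T (T x))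

namespace ContractsPerimeters

variable {T : X → X} {lam : ℝ}

theorem eq_or_eq_or_eq_of_isFixedPt (hT : ContractsPerimeters T lam) (hlam : lam < 1)
    {x y z : X} (hx : IsFixedPt T x) (hy : IsFixedPt T y) (hz : IsFixedPt T z) :
    x = y ∨ x = z ∨ y = z := by
  by_contra! h
  obtain ⟨hxy, hxz, hyz⟩ := h
  have hle := hT x y z hxy hxz hyz
  rw [hx.eq, hy.eq, hz.eq] at hle
  exact (mul_lt_of_lt_one_left (perimeter_pos hxy z) hlam).not_ge hle

theorem isFixedPt_of_tendsto (hT : ContractsPerimeters T lam) {u : ℕ → X} {b : X}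
    (hu : ∀ n, u (n + 1) = T (u n)) (hinj : Injective u) (hb : Tendsto u atTop (𝓝 b)) :
    IsFixedPt T b := by
  have hb' : Tendsto (fun n => u (n + 1)) atTop (𝓝 b) := hb.comp (tendsto_add_atTop_nat 1)
  have hne : ∀ᶠ n in atTop, u n ≠ b := by
    rw [← Nat.cofinite_eq_atTop]
    exact hinj.tendsto_cofinite.eventually (eventually_cofinite_ne b)
  have hbound : ∀ᶠ n in atTop,
      dist (T b) b ≤ lam * perimeter (u n) (u (n + 1)) b + dist (u (n + 1)) b := by
    filter_upwards [hne, (tendsto_add_atTop_nat 1).eventually hne] with n hn hn1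
    have hle := hT (u n) (u (n + 1)) b (hinj.ne n.succ_ne_self.symm) hn hn1
    rw [← hu, ← hu] at hle
    calc dist (T b) b ≤ dist (T b) (u (n + 1)) + dist (u (n + 1)) b := dist_triangle _ _ _
      _ ≤ perimeter (u (n + 1)) (u (n + 2)) (T b) + dist (u (n + 1)) b := by
          gcongr
          rw [perimeter, dist_comm (T b)]
          linarith [dist_nonneg (x := u (n + 1)) (y := u (n + 2)),
            dist_nonneg (x := u (n + 2)) (y := T b)]
      _ ≤ _ := by gcongr
  have hlim : Tendsto (fun n => lam * perimeter (u n) (u (n + 1)) b + dist (u (n + 1)) b)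
      atTop (𝓝 0) := by
    have hper : Tendsto (fun n => perimeter (u n) (u (n + 1)) b) atTop (𝓝 (perimeter b b b)) :=
      ((hb.dist hb').add (hb'.dist tendsto_const_nhds)).add (tendsto_const_nhds.dist hb)
    simpa using (hper.const_mul lam).add (hb'.dist (tendsto_const_nhds (x := b)))
  exact dist_le_zero.1 (ge_of_tendsto hlim hbound)

section NoFixedPoint

variable (hT : ContractsPerimeters T lam) (hT₁ : ∀ x, T x ≠ x) (hT₂ : ∀ x, T (T x) ≠ x)
include hT hT₁ hT₂

theorem orbitPerimeter_apply_le (x : X) :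
    orbitPerimeter T (T x) ≤ lam * orbitPerimeter T x :=
  hT x (T x) (T (T x)) (hT₁ x).symm (hT₂ x).symm (hT₁ (T x)).symm

theorem orbitPerimeter_iterate_le (hlam : 0 ≤ lam) (k : ℕ) (x : X) :
    orbitPerimeter T (T^[k] x) ≤ lam ^ k * orbitPerimeter T x := by
  induction k generalizing x with
  | zero => simp
  | succ k ih =>
    calc orbitPerimeter T (T^[k + 1] x) = orbitPerimeter T (T^[k] (T x)) := by
          rw [iterate_succ_apply]
      _ ≤ lam ^ k * orbitPerimeter T (T x) := ih (T x)
      _ ≤ lam ^ k * (lam * orbitPerimeter T x) := by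
          gcongr
          exact hT.orbitPerimeter_apply_le hT₁ hT₂ x
      _ = lam ^ (k + 1) * orbitPerimeter T x := by ring

theorem iterate_ne_self (hlam₀ : 0 ≤ lam) (hlam₁ : lam < 1) {k : ℕ} (hk : k ≠ 0) (x : X) :
    T^[k] x ≠ x := by
  intro hx
  have hle := hT.orbitPerimeter_iterate_le hT₁ hT₂ hlam₀ k x
  rw [hx] at hle
  exact (mul_lt_of_lt_one_left (perimeter_pos (hT₁ x).symm _)
    (pow_lt_one₀ hlam₀ hlam₁ hk)).not_ge hle

theorem injective_iterate_apply (hlam₀ : 0 ≤ lam) (hlam₁ : lam < 1) (x : X) :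
    Injective fun n => T^[n] x := by
  have hlt : ∀ m n, m < n → T^[n] x ≠ T^[m] x := by
    intro m n hmn
    rw [← Nat.sub_add_cancel hmn.le, iterate_add_apply]
    exact hT.iterate_ne_self hT₁ hT₂ hlam₀ hlam₁ (Nat.sub_ne_zero_of_lt hmn) _
  intro m n h
  rcases lt_trichotomy m n with hmn | hmn | hmn
  · exact absurd h.symm (hlt m n hmn)
  · exact hmn
  · exact absurd h (hlt n m hmn)

theorem cauchySeq_iterate_apply (hlam₀ : 0 ≤ lam) (hlam₁ : lam < 1) (x : X) :
    CauchySeq fun n => T^[n] x := by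
  refine cauchySeq_of_le_geometric lam (orbitPerimeter T x) hlam₁ fun n => ?_
  calc dist (T^[n] x) (T^[n + 1] x) ≤ orbitPerimeter T (T^[n] x) := by
        rw [iterate_succ_apply']
        exact dist_le_perimeter _ _ _
    _ ≤ lam ^ n * orbitPerimeter T x := hT.orbitPerimeter_iterate_le hT₁ hT₂ hlam₀ n x
    _ = orbitPerimeter T x * lam ^ n := mul_comm _ _

end NoFixedPoint

end ContractsPerimeters

end

/-- Corollary 4.2 (Petrov): mappings contracting perimeters of triangles on a complete
metric space with at least 3 points have at least one and at most two fixed points. -/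
theorem fixedPoint_contracting_perimeters {X : Type*} [MetricSpace X] [CompleteSpace X]
    (hcard : ∃ a b c : X, a ≠ b ∧ a ≠ c ∧ b ≠ c)
    (T : X → X)
    (hI : ∀ x : X, T x ≠ x → T (T x) ≠ x)
    (hII : ∃ lam : ℝ, 0 < lam ∧ lam < 1 ∧
      ∀ x y z : X, x ≠ y → x ≠ z → y ≠ z →
        dist (T x) (T y) + dist (T y) (T z) + dist (T z) (T x) ≤
          lam * (dist x y + dist y z + dist z x)) :
    (∃ x : X, T x = x) ∧
      ∀ x y z : X, T x = x → T y = y → T z = z → x = y ∨ x = z ∨ y = z := by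
  obtain ⟨lam, hlam₀, hlam₁, hT⟩ := hII
  change ContractsPerimeters T lam at hT
  refine ⟨?_, fun x y z hx hy hz => hT.eq_or_eq_or_eq_of_isFixedPt hlam₁ hx hy hz⟩
  by_contra! hT₁
  have hT₂ : ∀ x, T (T x) ≠ x := fun x => hI x (hT₁ x)
  obtain ⟨a, -⟩ := hcard
  obtain ⟨b, hb⟩ := cauchySeq_tendsto_of_complete
    (hT.cauchySeq_iterate_apply hT₁ hT₂ hlam₀.le hlam₁ a)
  exact hT₁ b <| hT.isFixedPt_of_tendsto (fun n => iterate_succ_apply' T n a)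
    (hT.injective_iterate_apply hT₁ hT₂ hlam₀.le hlam₁ a) hb
end

section
/- Let (X,d) be a complete metric space with at least 3 elements and let T : X → X be a mapping such that (I) for all x ∈ X, if Tx ≠ x then T(Tx) ≠ x, and (II) there exists a constant λ ∈ (0,1) such that max{d(Tx,Ty), d(Ty,Tz), d(Tz,Tx)} ≤ λ·max{d(x,y), d(y,z), d(x,z)} for all pairwise distinct points x, y, z ∈ X. Then T has at least one fixed point, and T has at most two fixed points. -/
/-!
The contraction condition makes `T` Lipschitz at every accumulation point `p`: for `x ≠ p`, a
third point `z` closer to `p` than `x` gives `dist (T x) (T p) ≤ 2λ · dist x p`. So `T` is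
continuous (isolated points being trivial). If `T` had no fixed point, condition (I) would make
every orbit triple `(y, T y, T² y)` pairwise distinct, so the diameters of these triples shrink
geometrically along the orbit; the orbit is then Cauchy, and its limit is fixed by continuity.
Three distinct fixed points would contradict the contraction of their triangle.
-/

open Filter Function Topology

section

variable {X : Type*} [MetricSpace X]

def maxDist (x y z : X) : ℝ := max (dist x y) (max (dist y z) (dist x z))

lemma dist_le_maxDist (x y z : X) : dist x y ≤ maxDist x y z := le_max_left _ _

def IsTriangleContraction (T : X → X) (lam : ℝ) : Prop :=
  ∀ x y z : X, x ≠ y → x ≠ z → y ≠ z → maxDist (T x) (T y) (T z) ≤ lam * maxDist x y z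

namespace IsTriangleContraction

variable {T : X → X} {lam : ℝ}

lemma eq_or_eq_or_eq_of_isFixedPt (hT : IsTriangleContraction T lam) (hlam : lam < 1)
    {x y z : X} (hx : IsFixedPt T x) (hy : IsFixedPt T y) (hz : IsFixedPt T z) :
    x = y ∨ x = z ∨ y = z := by
  by_contra! ⟨hxy, hxz, hyz⟩
  have h := hT x y z hxy hxz hyz
  rw [hx, hy, hz] at h
  have hpos : 0 < maxDist x y z := (dist_pos.mpr hxy).trans_le (dist_le_maxDist x y z)
  nlinarith

lemma dist_apply_le (hT : IsTriangleContraction T lam) (hlam : 0 ≤ lam) {x p z : X}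
    (hzp : z ≠ p) (hz : dist z p < dist x p) : dist (T x) (T p) ≤ 2 * lam * dist x p := by
  have hxp : x ≠ p := dist_pos.mp (dist_nonneg.trans_lt hz)
  have hxz : x ≠ z := by rintro rfl; exact lt_irrefl _ hz
  have hdiam : maxDist x p z ≤ 2 * dist x p := by
    have := dist_triangle_right x z p
    have := dist_comm p z
    have := dist_nonneg (x := x) (y := p)
    simp only [maxDist, max_le_iff]
    exact ⟨by linarith, by linarith, by linarith⟩
  calc dist (T x) (T p) ≤ maxDist (T x) (T p) (T z) := dist_le_maxDist _ _ _
    _ ≤ lam * maxDist x p z := hT x p z hxp hxz hzp.symm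
    _ ≤ lam * (2 * dist x p) := by gcongr
    _ = 2 * lam * dist x p := by ring

lemma continuous (hT : IsTriangleContraction T lam) (hlam : 0 ≤ lam) : Continuous T := by
  refine continuous_iff_continuousAt.mpr fun p => ?_
  by_cases hacc : AccPt p (𝓟 {p}ᶜ)
  swap
  · exact continuousAt_of_not_accPt hacc
  have hbound : ∀ x, dist (T x) (T p) ≤ 2 * lam * dist x p := by
    intro x
    rcases eq_or_ne x p with rfl | hxp
    · simp
    obtain ⟨z, ⟨hz, -⟩, hzp⟩ := accPt_iff_nhds.mp hacc _
      (Metric.ball_mem_nhds p (dist_pos.mpr hxp))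
    exact hT.dist_apply_le hlam hzp hz
  have hlim : Tendsto (fun x => 2 * lam * dist x p) (𝓝 p) (𝓝 0) := by
    have := ((tendsto_id (x := 𝓝 p)).dist (tendsto_const_nhds (x := p))).const_mul (2 * lam)
    rwa [dist_self, mul_zero] at this
  exact tendsto_iff_dist_tendsto_zero.mpr (squeeze_zero (fun _ => dist_nonneg) hbound hlim)

lemma maxDist_iterate_le (hT : IsTriangleContraction T lam) (hlam : 0 ≤ lam)
    (hfree : ∀ x, T x ≠ x) (hI : ∀ x : X, T x ≠ x → T (T x) ≠ x) (a : X) (n : ℕ) :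
    maxDist (T^[n] a) (T (T^[n] a)) (T (T (T^[n] a))) ≤
      lam ^ n * maxDist a (T a) (T (T a)) := by
  induction n with
  | zero => simp
  | succ n ih =>
    rw [iterate_succ_apply']
    set y := T^[n] a
    calc _ ≤ lam * maxDist y (T y) (T (T y)) :=
          hT y (T y) (T (T y)) (hfree y).symm (hI y (hfree y)).symm (hfree (T y)).symm
      _ ≤ lam * (lam ^ n * maxDist a (T a) (T (T a))) := by gcongr
      _ = lam ^ (n + 1) * maxDist a (T a) (T (T a)) := by ring

lemma cauchySeq_iterate (hT : IsTriangleContraction T lam) (hlam0 : 0 ≤ lam) (hlam1 : lam < 1)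
    (hfree : ∀ x, T x ≠ x) (hI : ∀ x : X, T x ≠ x → T (T x) ≠ x) (a : X) :
    CauchySeq fun n => T^[n] a := by
  refine cauchySeq_of_le_geometric lam (maxDist a (T a) (T (T a))) hlam1 fun n => ?_
  rw [iterate_succ_apply', mul_comm]
  exact (dist_le_maxDist _ _ _).trans (hT.maxDist_iterate_le hlam0 hfree hI a n)

lemma exists_isFixedPt [CompleteSpace X] (hT : IsTriangleContraction T lam) (hlam0 : 0 ≤ lam)
    (hlam1 : lam < 1) (hI : ∀ x : X, T x ≠ x → T (T x) ≠ x) (a : X) : ∃ p, IsFixedPt T p := by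
  by_contra! hfree
  obtain ⟨p, hp⟩ := cauchySeq_tendsto_of_complete (hT.cauchySeq_iterate hlam0 hlam1 hfree hI a)
  exact hfree p (isFixedPt_of_tendsto_iterate hp (hT.continuous hlam0).continuousAt)

end IsTriangleContraction

end

/-- Corollary 4.3: max-type contraction on pairwise distinct triples in a complete metric
space with at least 3 points. -/
theorem fixedPoint_max_contraction {X : Type*} [MetricSpace X] [CompleteSpace X]
    (hcard : ∃ a b c : X, a ≠ b ∧ a ≠ c ∧ b ≠ c)
    (T : X → X)
    (hI : ∀ x : X, T x ≠ x → T (T x) ≠ x)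
    (hII : ∃ lam : ℝ, 0 < lam ∧ lam < 1 ∧
      ∀ x y z : X, x ≠ y → x ≠ z → y ≠ z →
        max (dist (T x) (T y)) (max (dist (T y) (T z)) (dist (T z) (T x))) ≤
          lam * max (dist x y) (max (dist y z) (dist x z))) :
    (∃ x : X, T x = x) ∧
      ∀ x y z : X, T x = x → T y = y → T z = z → x = y ∨ x = z ∨ y = z := by
  obtain ⟨lam, hlam0, hlam1, hcontr⟩ := hII
  have hT : IsTriangleContraction T lam := fun x y z hxy hxz hyz => by
    simpa only [maxDist, dist_comm (T z) (T x)] using hcontr x y z hxy hxz hyz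
  obtain ⟨a, -⟩ := hcard
  exact ⟨hT.exists_isFixedPt hlam0.le hlam1 hI a,
    fun _ _ _ => hT.eq_or_eq_or_eq_of_isFixedPt hlam1⟩
end

section
/- Let (X,d) be a complete metric space with at least 3 elements and let T : X → X be a mapping such that (I) for all x ∈ X, if Tx ≠ x then T(Tx) ≠ x, and (II) there exists a constant λ ∈ (0,1/3) such that d(Tx,Ty) + d(Ty,Tz) + d(Tx,Tz) ≤ λ·[d(x,Tx) + d(y,Ty) + d(z,Tz)] for all pairwise distinct points x, y, z ∈ X. Then T has at least one fixed point, and T has at most two fixed points. -/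
/-!
Suppose `T` has no fixed point. By (I), `x`, `T x`, `T² x` are pairwise distinct, and the
perimeter condition on this triangle gives `g (T x) ≤ λ / (1 - λ) · g x` for
`g x = d(x, T x) + d(T x, T² x)`; as `λ < 1/2`, every orbit is Cauchy, and injective because `g`
strictly decreases along it. For its limit `x`, the condition on the triangle `Tⁿ a, Tⁿ⁺¹ a, x`
yields `d(x, T x) ≤ λ d(x, T x)` as `n → ∞`, so `x` is fixed after all. Three distinct fixed
points would form a triangle of positive perimeter bounded by `λ · 0`.
-/

open Filter Topology Function

section

variable {X : Type*} [MetricSpace X]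

def KannanPerimeterContraction (T : X → X) (lam : ℝ) : Prop :=
  ∀ x y z : X, x ≠ y → x ≠ z → y ≠ z →
    dist (T x) (T y) + dist (T y) (T z) + dist (T x) (T z) ≤
      lam * (dist x (T x) + dist y (T y) + dist z (T z))

def twoStepDist (T : X → X) (x : X) : ℝ :=
  dist x (T x) + dist (T x) (T (T x))

theorem twoStepDist_pos {T : X → X} {x : X} (hx : T x ≠ x) : 0 < twoStepDist T x :=
  add_pos_of_pos_of_nonneg (dist_pos.2 hx.symm) dist_nonneg

namespace KannanPerimeterContraction

variable {T : X → X} {lam : ℝ}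

theorem eq_or_eq_or_eq_of_isFixedPt (hT : KannanPerimeterContraction T lam) {x y z : X}
    (hx : IsFixedPt T x) (hy : IsFixedPt T y) (hz : IsFixedPt T z) :
    x = y ∨ x = z ∨ y = z := by
  by_contra! ⟨hxy, hxz, hyz⟩
  have hle := hT x y z hxy hxz hyz
  rw [hx.eq, hy.eq, hz.eq, dist_self, dist_self, dist_self] at hle
  linarith [dist_pos.2 hxy, dist_nonneg (x := y) (y := z), dist_nonneg (x := x) (y := z)]

theorem twoStepDist_apply_le (hT : KannanPerimeterContraction T lam) (hlam₀ : 0 ≤ lam)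
    (hlam : lam < 1) {x : X} (h₁ : T x ≠ x) (h₂ : T (T x) ≠ x) (h₃ : T (T x) ≠ T x) :
    twoStepDist T (T x) ≤ lam / (1 - lam) * twoStepDist T x := by
  have hle := hT x (T x) (T (T x)) h₁.symm h₂.symm h₃.symm
  rw [div_mul_eq_mul_div, le_div_iff₀ (sub_pos.2 hlam)]
  unfold twoStepDist
  nlinarith [dist_nonneg (x := T x) (y := T (T (T x))),
    mul_nonneg hlam₀ (dist_nonneg (x := T x) (y := T (T x)))]

theorem twoStepDist_iterate_succ_le (hT : KannanPerimeterContraction T lam) (hlam₀ : 0 ≤ lam)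
    (hlam : lam < 1) (hT₁ : ∀ x, T x ≠ x) (hT₂ : ∀ x, T (T x) ≠ x) (a : X) (n : ℕ) :
    twoStepDist T (T^[n + 1] a) ≤ lam / (1 - lam) * twoStepDist T (T^[n] a) := by
  rw [iterate_succ_apply']
  exact hT.twoStepDist_apply_le hlam₀ hlam (hT₁ _) (hT₂ _) (hT₁ _)

theorem twoStepDist_iterate_le (hT : KannanPerimeterContraction T lam) (hlam₀ : 0 ≤ lam)
    (hlam : lam < 1) (hT₁ : ∀ x, T x ≠ x) (hT₂ : ∀ x, T (T x) ≠ x) (a : X) (n : ℕ) :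
    twoStepDist T (T^[n] a) ≤ (lam / (1 - lam)) ^ n * twoStepDist T a :=
  le_geom (u := fun n => twoStepDist T (T^[n] a)) (div_nonneg hlam₀ (sub_nonneg.2 hlam.le)) n
    fun k _ => hT.twoStepDist_iterate_succ_le hlam₀ hlam hT₁ hT₂ a k

theorem injective_iterate (hT : KannanPerimeterContraction T lam) (hlam₀ : 0 ≤ lam)
    (hlam : lam < 1 / 2) (hT₁ : ∀ x, T x ≠ x) (hT₂ : ∀ x, T (T x) ≠ x) (a : X) :
    Injective (T^[·] a) := by
  have hratio : lam / (1 - lam) < 1 := (div_lt_one (by linarith)).2 (by linarith)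
  have hanti : StrictAnti (twoStepDist T ∘ (T^[·] a)) := strictAnti_nat_of_succ_lt fun n =>
    (hT.twoStepDist_iterate_succ_le hlam₀ (by linarith) hT₁ hT₂ a n).trans_lt
      (mul_lt_of_lt_one_left (twoStepDist_pos (hT₁ _)) hratio)
  exact hanti.injective.of_comp

theorem cauchySeq_iterate (hT : KannanPerimeterContraction T lam) (hlam₀ : 0 ≤ lam)
    (hlam : lam < 1 / 2) (hT₁ : ∀ x, T x ≠ x) (hT₂ : ∀ x, T (T x) ≠ x) (a : X) :
    CauchySeq (T^[·] a) := by
  refine cauchySeq_of_le_geometric (lam / (1 - lam)) (twoStepDist T a)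
    ((div_lt_one (by linarith)).2 (by linarith)) fun n => ?_
  calc dist (T^[n] a) (T^[n + 1] a)
      ≤ twoStepDist T (T^[n] a) := by
        rw [iterate_succ_apply']
        exact le_add_of_nonneg_right dist_nonneg
    _ ≤ _ := by
        rw [mul_comm]
        exact hT.twoStepDist_iterate_le hlam₀ (by linarith) hT₁ hT₂ a n

theorem isFixedPt_of_tendsto_iterate (hT : KannanPerimeterContraction T lam) (hlam : lam < 1)
    {a x : X} (hinj : Injective (T^[·] a)) (hx : Tendsto (T^[·] a) atTop (𝓝 x)) :
    IsFixedPt T x := by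
  have hx₁ : Tendsto (T^[· + 1] a) atTop (𝓝 x) := hx.comp (tendsto_add_atTop_nat 1)
  have hx₂ : Tendsto (T^[· + 2] a) atTop (𝓝 x) := hx.comp (tendsto_add_atTop_nat 2)
  have hne : ∀ᶠ n in atTop, T^[n] a ≠ x := by
    simpa [Nat.cofinite_eq_atTop] using hinj.tendsto_cofinite.eventually (eventually_cofinite_ne x)
  have hle : ∀ᶠ n in atTop, dist (T^[n + 1] a) (T x) ≤
      lam * (dist (T^[n] a) (T^[n + 1] a) + dist (T^[n + 1] a) (T^[n + 2] a) + dist x (T x)) := by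
    filter_upwards [hne, (tendsto_add_atTop_nat 1).eventually hne] with n hn hn₁
    have h := hT _ _ x (hinj.ne n.lt_succ_self.ne) hn hn₁
    simp only [← iterate_succ_apply' T] at h
    linarith [dist_nonneg (x := T^[n + 1] a) (y := T^[n + 2] a),
      dist_nonneg (x := T^[n + 2] a) (y := T x)]
  have hlim := le_of_tendsto_of_tendsto (hx₁.dist tendsto_const_nhds)
    ((((hx.dist hx₁).add (hx₁.dist hx₂)).add tendsto_const_nhds).const_mul lam) hle
  rw [dist_self, zero_add, zero_add] at hlim
  exact (dist_le_zero.1 (by nlinarith [dist_nonneg (x := x) (y := T x)])).symm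

theorem exists_isFixedPt [CompleteSpace X] (hT : KannanPerimeterContraction T lam)
    (hlam₀ : 0 ≤ lam) (hlam : lam < 1 / 2) (hI : ∀ x, T x ≠ x → T (T x) ≠ x) (a : X) :
    ∃ x, IsFixedPt T x := by
  by_contra! hT₁
  have hT₂ x : T (T x) ≠ x := hI x (hT₁ x)
  obtain ⟨x, hx⟩ := cauchySeq_tendsto_of_complete (hT.cauchySeq_iterate hlam₀ hlam hT₁ hT₂ a)
  exact hT₁ x (hT.isFixedPt_of_tendsto_iterate (by linarith)
    (hT.injective_iterate hlam₀ hlam hT₁ hT₂ a) hx)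

end KannanPerimeterContraction

end

/-- Corollary 4.4: Kannan-type perimeter contraction in a complete metric space with at
least 3 points. -/
theorem fixedPoint_kannan_perimeters {X : Type*} [MetricSpace X] [CompleteSpace X]
    (hcard : ∃ a b c : X, a ≠ b ∧ a ≠ c ∧ b ≠ c)
    (T : X → X)
    (hI : ∀ x : X, T x ≠ x → T (T x) ≠ x)
    (hII : ∃ lam : ℝ, 0 < lam ∧ lam < 1 / 3 ∧
      ∀ x y z : X, x ≠ y → x ≠ z → y ≠ z →
        dist (T x) (T y) + dist (T y) (T z) + dist (T x) (T z) ≤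
          lam * (dist x (T x) + dist y (T y) + dist z (T z))) :
    (∃ x : X, T x = x) ∧
      ∀ x y z : X, T x = x → T y = y → T z = z → x = y ∨ x = z ∨ y = z := by
  obtain ⟨lam, hlam₀, hlam, hT⟩ := hII
  replace hT : KannanPerimeterContraction T lam := hT
  obtain ⟨a, -⟩ := hcard
  exact ⟨hT.exists_isFixedPt hlam₀.le (by linarith) hI a,
    fun _ _ _ => hT.eq_or_eq_or_eq_of_isFixedPt⟩
end

section
/- Let (X,d) be a complete metric space with at least 3 elements and let T : X → X be a mapping such that (I) for all x ∈ X, if Tx ≠ x then T(Tx) ≠ x, and (II) there exist nonnegative constants a₁, a₂, a₃, a₄ with 0 < a₁ + a₂ + a₃ + a₄ < 1 such that max{d(Tx,Ty), d(Ty,Tz), d(Tx,Tz)} ≤ a₁·d(x,Tx) + a₂·d(y,Ty) + a₃·d(z,Tz) + a₄·max{d(x,y), d(y,z), d(x,z)} for all pairwise distinct points x, y, z ∈ X. Then T has at least one fixed point, and T has at most two fixed points. -/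
/-! With no fixed point, condition (I) makes any three consecutive points of an orbit pairwise
distinct, so (II) applies to them: the largest of the three distances among `Tⁿx, Tⁿ⁺¹x, Tⁿ⁺²x`
shrinks by the factor `(a₁ + a₂ + a₄) / (1 - a₃) < 1` at every step, and the orbit is Cauchy.
Applying (II) to the limit `q` and two consecutive orbit points different from `q` and letting
`n → ∞` gives `d(Tq, q) ≤ a₁ d(q, Tq)`, so `q` is fixed after all. Three distinct fixed points
would give `M ≤ a₄ M` for their largest mutual distance `M > 0`. -/

open Filter Topology Function

section

variable {X : Type*}

lemma frequently_ne_iterate {T : X → X} {q : X} (h₁ : T q ≠ q) (h₂ : T (T q) ≠ q) (x : X) :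
    ∃ᶠ n in atTop, q ≠ T^[n] x ∧ q ≠ T^[n + 1] x := by
  have hnext : ∀ m, T^[m] x = q → q ≠ T^[m + 1] x ∧ q ≠ T^[m + 1 + 1] x := fun m hm => by
    simp only [iterate_succ_apply', hm]
    exact ⟨h₁.symm, h₂.symm⟩
  refine frequently_atTop.mpr fun N => ?_
  by_cases hN : T^[N] x = q
  · exact ⟨N + 1, by omega, hnext N hN⟩
  by_cases hN' : T^[N + 1] x = q
  · exact ⟨N + 1 + 1, by omega, hnext (N + 1) hN'⟩
  exact ⟨N, le_rfl, Ne.symm hN, Ne.symm hN'⟩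

variable [MetricSpace X]

def maxDist3 (x y z : X) : ℝ := max (dist x y) (max (dist y z) (dist x z))

lemma dist_le_maxDist3_left (x y z : X) : dist x y ≤ maxDist3 x y z := le_max_left _ _

lemma dist_le_maxDist3_middle (x y z : X) : dist y z ≤ maxDist3 x y z :=
  (le_max_left _ _).trans (le_max_right _ _)

lemma maxDist3_self (x : X) : maxDist3 x x x = 0 := by simp [maxDist3]

lemma Filter.Tendsto.maxDist3 {ι : Type*} {l : Filter ι} {f g h : ι → X} {x y z : X}
    (hf : Tendsto f l (𝓝 x)) (hg : Tendsto g l (𝓝 y)) (hh : Tendsto h l (𝓝 z)) :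
    Tendsto (fun i => _root_.maxDist3 (f i) (g i) (h i)) l (𝓝 (_root_.maxDist3 x y z)) :=
  (hf.dist hg).max ((hg.dist hh).max (hf.dist hh))

lemma cauchySeq_of_dist_le_of_le_mul {p : ℕ → X} {M : ℕ → ℝ} {r : ℝ} (hr₀ : 0 ≤ r) (hr₁ : r < 1)
    (hp : ∀ n, dist (p n) (p (n + 1)) ≤ M n) (hM : ∀ n, M (n + 1) ≤ r * M n) : CauchySeq p := by
  have hgeom : ∀ n, M n ≤ M 0 * r ^ n := by
    intro n
    induction n with
    | zero => simp
    | succ n ih =>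
      calc M (n + 1) ≤ r * M n := hM n
        _ ≤ r * (M 0 * r ^ n) := by gcongr
        _ = M 0 * r ^ (n + 1) := by ring
  exact cauchySeq_of_le_geometric r (M 0) hr₁ fun n => (hp n).trans (hgeom n)

def IsReichMaxContraction (T : X → X) (a₁ a₂ a₃ a₄ : ℝ) : Prop :=
  ∀ x y z : X, x ≠ y → x ≠ z → y ≠ z →
    maxDist3 (T x) (T y) (T z) ≤
      a₁ * dist x (T x) + a₂ * dist y (T y) + a₃ * dist z (T z) + a₄ * maxDist3 x y z

namespace IsReichMaxContraction

variable {T : X → X} {a₁ a₂ a₃ a₄ : ℝ}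

lemma eq_or_eq_or_eq_of_isFixedPt (hT : IsReichMaxContraction T a₁ a₂ a₃ a₄) (ha₄ : a₄ < 1)
    {x y z : X} (hx : IsFixedPt T x) (hy : IsFixedPt T y) (hz : IsFixedPt T z) :
    x = y ∨ x = z ∨ y = z := by
  by_contra! ⟨hxy, hxz, hyz⟩
  have h := hT x y z hxy hxz hyz
  rw [hx.eq, hy.eq, hz.eq] at h
  simp only [dist_self, mul_zero, zero_add] at h
  have hpos : 0 < maxDist3 x y z := (dist_pos.mpr hxy).trans_le (dist_le_maxDist3_left x y z)
  nlinarith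

lemma maxDist3_apply_le (hT : IsReichMaxContraction T a₁ a₂ a₃ a₄)
    (ha₁ : 0 ≤ a₁) (ha₂ : 0 ≤ a₂) (ha₃ : 0 ≤ a₃) (ha₃' : a₃ < 1) {x : X}
    (h₁ : x ≠ T x) (h₂ : x ≠ T (T x)) (h₃ : T x ≠ T (T x)) :
    maxDist3 (T x) (T (T x)) (T (T (T x))) ≤
      (a₁ + a₂ + a₄) / (1 - a₃) * maxDist3 x (T x) (T (T x)) := by
  have h := hT x (T x) (T (T x)) h₁ h₂ h₃
  have hx := dist_le_maxDist3_left x (T x) (T (T x))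
  have hTx := dist_le_maxDist3_middle x (T x) (T (T x))
  have hTTx := dist_le_maxDist3_middle (T x) (T (T x)) (T (T (T x)))
  rw [div_mul_eq_mul_div, le_div_iff₀ (by linarith)]
  nlinarith [mul_le_mul_of_nonneg_left hx ha₁, mul_le_mul_of_nonneg_left hTx ha₂,
    mul_le_mul_of_nonneg_left hTTx ha₃]

lemma cauchySeq_iterate (hT : IsReichMaxContraction T a₁ a₂ a₃ a₄)
    (ha₁ : 0 ≤ a₁) (ha₂ : 0 ≤ a₂) (ha₃ : 0 ≤ a₃) (ha₄ : 0 ≤ a₄) (hsum : a₁ + a₂ + a₃ + a₄ < 1)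
    (h₁ : ∀ x, T x ≠ x) (h₂ : ∀ x, T (T x) ≠ x) (x : X) : CauchySeq fun n => T^[n] x := by
  have hr₀ : 0 ≤ (a₁ + a₂ + a₄) / (1 - a₃) := div_nonneg (by linarith) (by linarith)
  have hr₁ : (a₁ + a₂ + a₄) / (1 - a₃) < 1 := (div_lt_one (by linarith)).mpr (by linarith)
  refine cauchySeq_of_dist_le_of_le_mul hr₀ hr₁
    (M := fun n => maxDist3 (T^[n] x) (T (T^[n] x)) (T (T (T^[n] x))))
    (fun n => by rw [iterate_succ_apply']; exact dist_le_maxDist3_left _ _ _) fun n => ?_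
  simp only [iterate_succ_apply']
  exact hT.maxDist3_apply_le ha₁ ha₂ ha₃ (by linarith) (h₁ _).symm (h₂ _).symm (h₁ _).symm

lemma isFixedPt_of_tendsto (hT : IsReichMaxContraction T a₁ a₂ a₃ a₄) (ha₁ : a₁ < 1)
    {p : ℕ → X} (hp : ∀ n, T (p n) = p (n + 1)) (hsucc : ∀ n, p n ≠ p (n + 1)) {q : X}
    (hq : Tendsto p atTop (𝓝 q)) (hne : ∃ᶠ n in atTop, q ≠ p n ∧ q ≠ p (n + 1)) :
    IsFixedPt T q := by
  have hq₁ : Tendsto (fun n => p (n + 1)) atTop (𝓝 q) := hq.comp (tendsto_add_atTop_nat 1)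
  have hq₂ : Tendsto (fun n => p (n + 1 + 1)) atTop (𝓝 q) := hq₁.comp (tendsto_add_atTop_nat 1)
  have hle := le_of_tendsto_of_tendsto_of_frequently (tendsto_const_nhds.dist hq₁)
    ((((tendsto_const_nhds (x := a₁ * dist q (T q))).add ((hq.dist hq₁).const_mul a₂)).add
      ((hq₁.dist hq₂).const_mul a₃)).add ((tendsto_const_nhds.maxDist3 hq hq₁).const_mul a₄))
    (hne.mono fun n ⟨hn, hn'⟩ => by
      have h := hT q (p n) (p (n + 1)) hn hn' (hsucc n)
      rw [hp, hp] at h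
      exact (dist_le_maxDist3_left _ _ _).trans h)
  simp only [dist_self, maxDist3_self, mul_zero, add_zero, dist_comm (T q)] at hle
  exact dist_le_zero.mp (by nlinarith [dist_nonneg (x := q) (y := T q)]) |>.symm

end IsReichMaxContraction

end

/-- Corollary 4.6 (max form): Reich-type max contraction in a complete metric space with
at least 3 points. -/
theorem fixedPoint_reich_max {X : Type*} [MetricSpace X] [CompleteSpace X]
    (hcard : ∃ a b c : X, a ≠ b ∧ a ≠ c ∧ b ≠ c)
    (T : X → X)
    (hI : ∀ x : X, T x ≠ x → T (T x) ≠ x)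
    (hII : ∃ a₁ a₂ a₃ a₄ : ℝ, 0 ≤ a₁ ∧ 0 ≤ a₂ ∧ 0 ≤ a₃ ∧ 0 ≤ a₄ ∧
      0 < a₁ + a₂ + a₃ + a₄ ∧ a₁ + a₂ + a₃ + a₄ < 1 ∧
      ∀ x y z : X, x ≠ y → x ≠ z → y ≠ z →
        max (dist (T x) (T y)) (max (dist (T y) (T z)) (dist (T x) (T z))) ≤
          a₁ * dist x (T x) + a₂ * dist y (T y) + a₃ * dist z (T z) +
            a₄ * max (dist x y) (max (dist y z) (dist x z))) :
    (∃ x : X, T x = x) ∧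
      ∀ x y z : X, T x = x → T y = y → T z = z → x = y ∨ x = z ∨ y = z := by
  obtain ⟨a₁, a₂, a₃, a₄, ha₁, ha₂, ha₃, ha₄, -, hsum, hcontr⟩ := hII
  have hT : IsReichMaxContraction T a₁ a₂ a₃ a₄ := hcontr
  refine ⟨?_, fun x y z => hT.eq_or_eq_or_eq_of_isFixedPt (by linarith)⟩
  by_contra! hfix
  have h₂ : ∀ x, T (T x) ≠ x := fun x => hI x (hfix x)
  obtain ⟨x, -⟩ := hcard
  obtain ⟨q, hq⟩ :=
    cauchySeq_tendsto_of_complete (hT.cauchySeq_iterate ha₁ ha₂ ha₃ ha₄ hsum hfix h₂ x)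
  have hstep (n : ℕ) : T (T^[n] x) = T^[n + 1] x := (iterate_succ_apply' T n x).symm
  exact hfix q <| hT.isFixedPt_of_tendsto (by linarith) hstep
    (fun n => hstep n ▸ (hfix _).symm) hq (frequently_ne_iterate (hfix q) (h₂ q) x)
end

section
/- Let G be a G-metric on a nonempty set X, let λ ∈ (0,1/3) and let T : X → X satisfy G(Tx,Ty,Tz) ≤ λ·[G(x,Tx,Tx) + G(y,Ty,Ty) + G(z,Tz,Tz)] for all x, y, z ∈ X. Define δ : X × X → [0,∞) by δ(x,y) = max{G(x,y,y), G(y,x,x)}. Then δ(Tx,Ty) ≤ 3λ·max{δ(x,Tx), δ(y,Ty)} for all x, y ∈ X. -/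
open Filter

theorem G_apply_le_three_mul_max_of_kannan {X : Type*} (G : X → X → X → ℝ) (T : X → X)
    {lam : ℝ} (hlam : 0 ≤ lam)
    (hT : ∀ x y z : X, G (T x) (T y) (T z) ≤
      lam * (G x (T x) (T x) + G y (T y) (T y) + G z (T z) (T z)))
    (x y : X) :
    G (T x) (T y) (T y) ≤ 3 * lam * max (G x (T x) (T x)) (G y (T y) (T y)) :=
  calc G (T x) (T y) (T y)
      ≤ lam * (G x (T x) (T x) + G y (T y) (T y) + G y (T y) (T y)) := hT x y y
    _ ≤ lam * (3 * max (G x (T x) (T x)) (G y (T y) (T y))) := by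
        gcongr
        linarith [le_max_left (G x (T x) (T x)) (G y (T y) (T y)),
          le_max_right (G x (T x) (T x)) (G y (T y) (T y))]
    _ = 3 * lam * max (G x (T x) (T x)) (G y (T y) (T y)) := by ring

theorem delta_kannan_of_G_kannan_general {X : Type*}
    (G : X → X → X → ℝ)
    (lam : ℝ) (hlam0 : 0 < lam)
    (T : X → X)
    (hT : ∀ x y z : X, G (T x) (T y) (T z) ≤
      lam * (G x (T x) (T x) + G y (T y) (T y) + G z (T z) (T z)))
    (δ : X → X → ℝ)
    (hδ : ∀ x y : X, δ x y = max (G x y y) (G y x x)) :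
    ∀ x y : X, δ (T x) (T y) ≤ 3 * lam * max (δ x (T x)) (δ y (T y)) := by
  intro x y
  have hG_le_δ : max (G x (T x) (T x)) (G y (T y) (T y)) ≤ max (δ x (T x)) (δ y (T y)) := by
    rw [hδ x (T x), hδ y (T y)]
    exact max_le_max (le_max_left _ _) (le_max_left _ _)
  have hGT_le := G_apply_le_three_mul_max_of_kannan G T hlam0.le hT
  have hcoef : 0 ≤ 3 * lam := by positivity
  rw [hδ (T x) (T y)]
  refine max_le ((hGT_le x y).trans ?_) ((hGT_le y x).trans ?_)
  · exact mul_le_mul_of_nonneg_left hG_le_δ hcoef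
  · exact mul_le_mul_of_nonneg_left (by rwa [max_comm (G y (T y) (T y))]) hcoef

/-- If `G (T x) (T y) (T z) ≤ λ (G x (T x) (T x) + G y (T y) (T y) + G z (T z) (T z))`
for all `x y z`, then the associated metric `δ x y = max {G x y y, G y x x}` satisfies
`δ (T x) (T y) ≤ 3 λ max {δ x (T x), δ y (T y)}`. -/
theorem delta_kannan_of_G_kannan {X : Type*} [Nonempty X]
    (G : X → X → X → ℝ) (hG : IsGMetric G)
    (lam : ℝ) (hlam0 : 0 < lam) (hlam1 : lam < 1 / 3)
    (T : X → X)
    (hT : ∀ x y z : X, G (T x) (T y) (T z) ≤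
      lam * (G x (T x) (T x) + G y (T y) (T y) + G z (T z) (T z)))
    (δ : X → X → ℝ)
    (hδ : ∀ x y : X, δ x y = max (G x y y) (G y x x)) :
    ∀ x y : X, δ (T x) (T y) ≤ 3 * lam * max (δ x (T x)) (δ y (T y)) :=
  delta_kannan_of_G_kannan_general G lam hlam0 T hT δ hδ
end

section
/- Let G be a G-metric on a nonempty set X, let a₁, a₂, a₃, a₄ be nonnegative constants with 0 < a₁ + a₂ + a₃ + a₄ < 1, and let T : X → X satisfy G(Tx,Ty,Tz) ≤ a₁·G(x,Tx,Tx) + a₂·G(y,Ty,Ty) + a₃·G(z,Tz,Tz) + a₄·G(x,y,z) for all x, y, z ∈ X. Define δ : X × X → [0,∞) by δ(x,y) = max{G(x,y,y), G(y,x,x)}. Then δ(Tx,Ty) ≤ (a₁ + a₂ + a₃ + a₄)·max{δ(x,Tx), δ(y,Ty), δ(x,y)} for all x, y ∈ X. -/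
open Filter

theorem le_sum_mul_of_reich {X : Type*} {G : X → X → X → ℝ} {a₁ a₂ a₃ a₄ : ℝ}
    (h₁ : 0 ≤ a₁) (h₂ : 0 ≤ a₂) (h₃ : 0 ≤ a₃) (h₄ : 0 ≤ a₄) {T : X → X}
    (hT : ∀ x y z : X, G (T x) (T y) (T z) ≤
      a₁ * G x (T x) (T x) + a₂ * G y (T y) (T y) + a₃ * G z (T z) (T z) + a₄ * G x y z)
    {x y : X} {M : ℝ} (hx : G x (T x) (T x) ≤ M) (hy : G y (T y) (T y) ≤ M)
    (hxy : G x y y ≤ M) :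
    G (T x) (T y) (T y) ≤ (a₁ + a₂ + a₃ + a₄) * M :=
  calc G (T x) (T y) (T y)
      ≤ a₁ * G x (T x) (T x) + a₂ * G y (T y) (T y) + a₃ * G y (T y) (T y) + a₄ * G x y y :=
        hT x y y
    _ ≤ a₁ * M + a₂ * M + a₃ * M + a₄ * M := by gcongr
    _ = (a₁ + a₂ + a₃ + a₄) * M := by ring

theorem delta_ciric_of_G_reich_general {X : Type*}
    (G : X → X → X → ℝ)
    (a₁ a₂ a₃ a₄ : ℝ) (h₁ : 0 ≤ a₁) (h₂ : 0 ≤ a₂) (h₃ : 0 ≤ a₃) (h₄ : 0 ≤ a₄)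
    (T : X → X)
    (hT : ∀ x y z : X, G (T x) (T y) (T z) ≤
      a₁ * G x (T x) (T x) + a₂ * G y (T y) (T y) + a₃ * G z (T z) (T z) + a₄ * G x y z)
    (δ : X → X → ℝ)
    (hδ : ∀ x y : X, δ x y = max (G x y y) (G y x x)) :
    ∀ x y : X, δ (T x) (T y) ≤
      (a₁ + a₂ + a₃ + a₄) * max (δ x (T x)) (max (δ y (T y)) (δ x y)) := by
  intro x y
  set M := max (δ x (T x)) (max (δ y (T y)) (δ x y))
  have hx : G x (T x) (T x) ≤ M := by simp [M, hδ]
  have hy : G y (T y) (T y) ≤ M := by simp [M, hδ]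
  have hxy : G x y y ≤ M := by simp [M, hδ]
  have hyx : G y x x ≤ M := by simp [M, hδ]
  rw [hδ]
  exact max_le (le_sum_mul_of_reich h₁ h₂ h₃ h₄ hT hx hy hxy)
    (le_sum_mul_of_reich h₁ h₂ h₃ h₄ hT hy hx hyx)

/-- Reich-type condition on `G` for all triples yields a Ćirić-type condition on the
associated metric `δ x y = max {G x y y, G y x x}`. -/
theorem delta_ciric_of_G_reich {X : Type*} [Nonempty X]
    (G : X → X → X → ℝ) (hG : IsGMetric G)
    (a₁ a₂ a₃ a₄ : ℝ) (h₁ : 0 ≤ a₁) (h₂ : 0 ≤ a₂) (h₃ : 0 ≤ a₃) (h₄ : 0 ≤ a₄)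
    (hpos : 0 < a₁ + a₂ + a₃ + a₄) (hlt : a₁ + a₂ + a₃ + a₄ < 1)
    (T : X → X)
    (hT : ∀ x y z : X, G (T x) (T y) (T z) ≤
      a₁ * G x (T x) (T x) + a₂ * G y (T y) (T y) + a₃ * G z (T z) (T z) + a₄ * G x y z)
    (δ : X → X → ℝ)
    (hδ : ∀ x y : X, δ x y = max (G x y y) (G y x x)) :
    ∀ x y : X, δ (T x) (T y) ≤
      (a₁ + a₂ + a₃ + a₄) * max (δ x (T x)) (max (δ y (T y)) (δ x y)) :=
  delta_ciric_of_G_reich_general G a₁ a₂ a₃ a₄ h₁ h₂ h₃ h₄ T hT δ hδ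
end
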